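/- arXiv:1509.09187 — 3 statements merged into one kernel-verified Lean document; each statement's English description precedes it below -/
import Mathlib

section
/- Let π⁰ and π¹ be two interlaced pairings of {1,…,d}. Then any x ∈ ℝ^d whose coordinates take more than 2 distinct values can be recovered from the values of the one-layer Haar scattering S_1 x computed with π⁰ together with S_1 x computed with π¹. That is, the map x ↦ (S_1^{π⁰} x, S_1^{π¹} x) is injective on the set of vectors with more than two distinct coordinate values. -/
/-!
Each pair's sum and absolute difference determine the pair of values up to order, so on every
pair of `π⁰` or `π¹` either `x = y` or `x` is `y` swapped. Hence the set where `x ≠ y` is invariant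
under both pairings, and by interlacing it is empty or everything. In the second case
`x = y ∘ π⁰ = y ∘ π¹`, and then the set of coordinates where `y` and `y ∘ π⁰` both take one of the
two values `y w`, `y (π⁰ w)` is again invariant under both pairings, so `y` takes at most two values.
-/

/-- A pairing of the `d` coordinates: a fixed-point-free involution; the pairs
are the orbits `{v, π v}`. -/
def IsPairing {d : ℕ} (p : Equiv.Perm (Fin d)) : Prop :=
  (∀ v, p (p v) = v) ∧ ∀ v, p v ≠ v

/-- Two pairings are interlaced if no strict nonempty subset of the coordinates
is simultaneously invariant under both pairings. -/
def Interlaced {d : ℕ} (p0 p1 : Equiv.Perm (Fin d)) : Prop :=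
  ∀ Ω : Set (Fin d), (∀ v ∈ Ω, p0 v ∈ Ω) → (∀ v ∈ Ω, p1 v ∈ Ω) → Ω = ∅ ∨ Ω = Set.univ

open Finset

theorem eq_and_eq_or_eq_and_eq_of_add_eq_add_of_abs_sub_eq {K : Type*} [Field K] [LinearOrder K]
    [IsStrictOrderedRing K] {a b c e : K} (hs : a + b = c + e) (hd : |a - b| = |c - e|) :
    (a = c ∧ b = e) ∨ (a = e ∧ b = c) := by
  rcases abs_eq_abs.mp hd with h | h
  · left; constructor <;> linarith
  · right; constructor <;> linarith

section Pairings

variable {d : ℕ} {p p0 p1 : Equiv.Perm (Fin d)} {x y : Fin d → ℝ}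

theorem apply_eq_apply_of_ne_of_haar_eq
    (e : ∀ u, x u + x (p u) = y u + y (p u) ∧ |x u - x (p u)| = |y u - y (p u)|)
    {v : Fin d} (hv : x v ≠ y v) : x v = y (p v) ∧ x (p v) = y v :=
  (eq_and_eq_or_eq_and_eq_of_add_eq_add_of_abs_sub_eq (e v).1 (e v).2).resolve_left
    fun h => hv h.1

theorem apply_ne_apply_of_ne_of_haar_eq
    (e : ∀ u, x u + x (p u) = y u + y (p u) ∧ |x u - x (p u)| = |y u - y (p u)|)
    {v : Fin d} (hv : x v ≠ y v) : x (p v) ≠ y (p v) := by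
  obtain ⟨hxv, hxpv⟩ := apply_eq_apply_of_ne_of_haar_eq e hv
  intro h
  exact hv (by rw [hxv, ← h, hxpv])

theorem Interlaced.card_image_le_two {α : Type*} [DecidableEq α] (hI : Interlaced p0 p1)
    (h0 : ∀ v, p0 (p0 v) = v) (h1 : ∀ v, p1 (p1 v) = v) {f : Fin d → α}
    (hf : ∀ v, f (p0 v) = f (p1 v)) : #(univ.image f) ≤ 2 := by
  rcases (univ : Finset (Fin d)).eq_empty_or_nonempty with hempty | ⟨w, -⟩
  · simp [hempty]
  set T : Finset α := {f w, f (p0 w)}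
  have hS := hI {v | f v ∈ T ∧ f (p0 v) ∈ T}
    (fun v ⟨hv, hpv⟩ => ⟨hpv, by rwa [h0]⟩)
    (fun v ⟨hv, hpv⟩ => ⟨by rwa [← hf], by rwa [hf, h1]⟩)
  have hw : w ∈ {v | f v ∈ T ∧ f (p0 v) ∈ T} := by simp [T]
  rcases hS with hS | hS
  · simp [hS] at hw
  have himage : univ.image f ⊆ T := by
    intro a ha
    obtain ⟨v, -, rfl⟩ := mem_image.mp ha
    exact (hS.symm ▸ Set.mem_univ v : v ∈ {v | f v ∈ T ∧ f (p0 v) ∈ T}).1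
  exact (card_le_card himage).trans card_le_two

end Pairings

theorem haar_one_layer_injective_general {d : ℕ} (p0 p1 : Equiv.Perm (Fin d))
    (h0 : IsPairing p0) (h1 : IsPairing p1) (hI : Interlaced p0 p1)
    (x y : Fin d → ℝ)
    (hy : 2 < (Finset.univ.image y).card)
    (e0 : ∀ u, x u + x (p0 u) = y u + y (p0 u) ∧ |x u - x (p0 u)| = |y u - y (p0 u)|)
    (e1 : ∀ u, x u + x (p1 u) = y u + y (p1 u) ∧ |x u - x (p1 u)| = |y u - y (p1 u)|) :
    x = y := by
  by_contra hxy
  rcases hI {v | x v ≠ y v} (fun _ => apply_ne_apply_of_ne_of_haar_eq e0)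
      (fun _ => apply_ne_apply_of_ne_of_haar_eq e1) with hA | hA
  · exact hxy (funext fun v => by_contra fun hv => (hA ▸ hv : v ∈ (∅ : Set (Fin d))))
  have hne (v : Fin d) : x v ≠ y v := (hA.symm ▸ Set.mem_univ v : v ∈ {v | x v ≠ y v})
  have hy_eq (v : Fin d) : y (p0 v) = y (p1 v) :=
    (apply_eq_apply_of_ne_of_haar_eq e0 (hne v)).1.symm.trans
      (apply_eq_apply_of_ne_of_haar_eq e1 (hne v)).1
  exact (hy.trans_le (hI.card_image_le_two h0.1 h1.1 hy_eq)).false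

/-- If `π⁰` and `π¹` are interlaced pairings of `{1,…,d}`, then any vector whose
coordinates take more than 2 distinct values is determined by the one-layer Haar
scattering data (pair sums and absolute pair differences) of both pairings:
the map `x ↦ (S_1^{π⁰} x, S_1^{π¹} x)` is injective on vectors with more than
two distinct coordinate values. -/
theorem haar_one_layer_injective {d : ℕ} (hd : Even d) (p0 p1 : Equiv.Perm (Fin d))
    (h0 : IsPairing p0) (h1 : IsPairing p1) (hI : Interlaced p0 p1)
    (x y : Fin d → ℝ)
    (hx : 2 < (Finset.univ.image x).card) (hy : 2 < (Finset.univ.image y).card)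
    (e0 : ∀ u, x u + x (p0 u) = y u + y (p0 u) ∧ |x u - x (p0 u)| = |y u - y (p0 u)|)
    (e1 : ∀ u, x u + x (p1 u) = y u + y (p1 u) ∧ |x u - x (p1 u)| = |y u - y (p1 u)|) :
    x = y :=
  haar_one_layer_injective_general p0 p1 h0 h1 hI x y hy e0 e1
end

section
/- For any j ≥ 0 and any finite training set {x_i}, the normalized empirical scattering variance is non-increasing with depth: σ²(2^{−(j+1)/2} S_{j+1} x) ≤ σ²(2^{−j/2} S_j x), where σ²(S_j x) = Σ_i ‖S_j x_i‖² − ‖Σ_i S_j x_i‖². -/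
/-!
Write `a i = S_j x_i` and `H = H_j`. Rescaling by `c` multiplies `σ²` by `c²`, and a linear map
with `‖H y‖ = √2 ‖y‖` multiplies it by `2`, so `σ²(H a) = 2 σ²(a)`. Taking coordinatewise absolute
values keeps every `‖H a i‖` but can only lengthen `‖∑ i, H a i‖`, hence `σ²(|H a|) ≤ σ²(H a)`.
The normalisations match because `2^{-(j+1)} · 2 = 2^{-j}`.
-/

/-- One Haar scattering layer with a pointwise absolute value on every output
coordinate: `S_{j+1} x = |H_j S_j x|`, where `H_j` computes pair sums (even
output indices) and pair differences (odd output indices) for the pairing `π`. -/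
noncomputable def absHaarLayer {d : ℕ} (π : Equiv.Perm (Fin d)) (x : Fin d → ℝ) : Fin d → ℝ :=
  fun m =>
    if (m : ℕ) % 2 = 0 then
      |x (π m) + x (π ⟨((m : ℕ) + 1) % d, Nat.mod_lt _ (Nat.lt_of_le_of_lt (Nat.zero_le _) m.isLt)⟩)|
    else
      |x (π ⟨(m : ℕ) - 1, Nat.lt_of_le_of_lt (Nat.sub_le _ _) m.isLt⟩) - x (π m)|

/-- Iterated Haar scattering `S_{j+1} x = |H_j S_j x|`. -/
noncomputable def absHaarScatter {d : ℕ} (π : ℕ → Equiv.Perm (Fin d)) :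
    ℕ → (Fin d → ℝ) → Fin d → ℝ
  | 0, x => x
  | (J + 1), x => absHaarLayer (π J) (absHaarScatter π J x)

/-- Non-normalized empirical variance of a family of vectors:
`σ²(v) = Σ_i ‖v i‖² − ‖Σ_i v i‖²`. -/
noncomputable def empVar {N d : ℕ} (v : Fin N → EuclideanSpace ℝ (Fin d)) : ℝ :=
  (∑ i, ‖v i‖ ^ 2) - ‖∑ i, v i‖ ^ 2

open Finset

section EmpiricalVariance

variable {N d : ℕ}

theorem empVar_smul (c : ℝ) (v : Fin N → EuclideanSpace ℝ (Fin d)) :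
    empVar (fun i => c • v i) = c ^ 2 * empVar v := by
  simp only [empVar, ← smul_sum, norm_smul, mul_pow, Real.norm_eq_abs, sq_abs, ← mul_sum]
  ring

theorem empVar_comp_of_norm_eq {d' : ℕ}
    {H : EuclideanSpace ℝ (Fin d) →ₗ[ℝ] EuclideanSpace ℝ (Fin d')} {c : ℝ}
    (hH : ∀ y, ‖H y‖ = c * ‖y‖) (v : Fin N → EuclideanSpace ℝ (Fin d)) :
    empVar (fun i => H (v i)) = c ^ 2 * empVar v := by
  simp only [empVar, ← map_sum, hH, mul_pow, ← mul_sum]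
  ring

theorem empVar_abs_le (v : Fin N → EuclideanSpace ℝ (Fin d)) :
    empVar (fun i => WithLp.toLp 2 |(v i).ofLp|) ≤ empVar v := by
  have norm_abs : ∀ w : EuclideanSpace ℝ (Fin d), ‖WithLp.toLp 2 |w.ofLp|‖ ^ 2 = ‖w‖ ^ 2 := by
    intro w
    simp [EuclideanSpace.real_norm_sq_eq, sq_abs]
  have norm_sum_le : ‖∑ i, v i‖ ^ 2 ≤ ‖∑ i, WithLp.toLp 2 |(v i).ofLp|‖ ^ 2 := by
    simp only [EuclideanSpace.real_norm_sq_eq, WithLp.ofLp_sum, Finset.sum_apply, Pi.abs_apply]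
    exact sum_le_sum fun m _ => sq_le_sq.2 ((abs_sum_le_sum_abs _ _).trans (le_abs_self _))
  simp only [empVar, norm_abs]
  linarith

end EmpiricalVariance

theorem Fin.sum_add_self_eq_sum_pairs {M : Type*} [AddCommMonoid M] {k : ℕ}
    (f : Fin (k + k) → M) :
    ∑ m, f m = ∑ i : Fin k, (f ⟨2 * i, by omega⟩ + f ⟨2 * i + 1, by omega⟩) := by
  rw [← (finProdFinEquiv.trans (finCongr (by omega : k * 2 = k + k))).sum_comp,
    Fintype.sum_prod_type]
  refine sum_congr rfl fun i _ => ?_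
  rw [Fin.sum_univ_two]
  congr 2 <;> ext <;> simp [add_comm]

noncomputable def haarLinear {d : ℕ} (π : Equiv.Perm (Fin d)) :
    EuclideanSpace ℝ (Fin d) →ₗ[ℝ] EuclideanSpace ℝ (Fin d) where
  toFun x := WithLp.toLp 2 fun m =>
    if (m : ℕ) % 2 = 0 then
      x (π m) + x (π ⟨((m : ℕ) + 1) % d, Nat.mod_lt _ (Nat.lt_of_le_of_lt (Nat.zero_le _) m.isLt)⟩)
    else
      x (π ⟨(m : ℕ) - 1, Nat.lt_of_le_of_lt (Nat.sub_le _ _) m.isLt⟩) - x (π m)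
  map_add' x y := by ext m; simp only [PiLp.add_apply]; split_ifs <;> ring
  map_smul' c x := by
    ext m
    simp only [PiLp.smul_apply, smul_eq_mul, RingHom.id_apply]
    split_ifs <;> ring

theorem absHaarLayer_eq_abs_haarLinear {d : ℕ} (π : Equiv.Perm (Fin d)) (x : Fin d → ℝ) :
    absHaarLayer π x = |(haarLinear π (WithLp.toLp 2 x)).ofLp| := by
  ext m
  simp only [absHaarLayer, haarLinear, LinearMap.coe_mk, AddHom.coe_mk, Pi.abs_apply]
  split_ifs <;> rfl

theorem norm_haarLinear {d : ℕ} (hd : Even d) (π : Equiv.Perm (Fin d))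
    (y : EuclideanSpace ℝ (Fin d)) : ‖haarLinear π y‖ = √2 * ‖y‖ := by
  obtain ⟨k, rfl⟩ := hd
  have norm_sq : ‖haarLinear π y‖ ^ 2 = 2 * ‖y‖ ^ 2 := by
    rw [EuclideanSpace.real_norm_sq_eq, EuclideanSpace.real_norm_sq_eq,
      ← Equiv.sum_comp π (fun m => y m ^ 2), Fin.sum_add_self_eq_sum_pairs,
      Fin.sum_add_self_eq_sum_pairs, mul_sum]
    refine sum_congr rfl fun i _ => ?_
    simp only [haarLinear, LinearMap.coe_mk, AddHom.coe_mk, Nat.mul_mod_right, ↓reduceIte,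
      Nat.mod_eq_of_lt (show 2 * (i : ℕ) + 1 < k + k by omega), Nat.mul_add_mod_self_left,
      Nat.mod_succ, one_ne_zero, add_tsub_cancel_right]
    ring
  rw [← sq_eq_sq₀ (norm_nonneg _) (by positivity), norm_sq, mul_pow, Real.sq_sqrt zero_le_two]

/-- The normalized empirical scattering variance is non-increasing with depth:
`σ²(2^{−(j+1)/2} S_{j+1} x) ≤ σ²(2^{−j/2} S_j x)`. -/
theorem empVar_haarScatter_le {d N : ℕ} (hd : Even d) (π : ℕ → Equiv.Perm (Fin d))
    (x : Fin N → Fin d → ℝ) (j : ℕ) :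
    empVar (fun i => ((2 : ℝ) ^ (-((j : ℝ) + 1) / 2)) •
        (WithLp.toLp 2 (absHaarScatter π (j + 1) (x i)) : EuclideanSpace ℝ (Fin d))) ≤
      empVar (fun i => ((2 : ℝ) ^ (-(j : ℝ) / 2)) •
        (WithLp.toLp 2 (absHaarScatter π j (x i)) : EuclideanSpace ℝ (Fin d))) := by
  set a : Fin N → EuclideanSpace ℝ (Fin d) := fun i => WithLp.toLp 2 (absHaarScatter π j (x i))
  have scale : ((2 : ℝ) ^ (-((j : ℝ) + 1) / 2)) ^ 2 * 2 = ((2 : ℝ) ^ (-(j : ℝ) / 2)) ^ 2 := by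
    rw [← Real.rpow_natCast, ← Real.rpow_natCast, ← Real.rpow_mul zero_le_two,
      ← Real.rpow_mul zero_le_two, ← Real.rpow_add_one two_ne_zero]
    norm_num
  calc _ = ((2 : ℝ) ^ (-((j : ℝ) + 1) / 2)) ^ 2 *
          empVar (fun i => WithLp.toLp 2 |(haarLinear (π j) (a i)).ofLp|) := by
        simp only [absHaarScatter, absHaarLayer_eq_abs_haarLinear, empVar_smul, a]
    _ ≤ ((2 : ℝ) ^ (-((j : ℝ) + 1) / 2)) ^ 2 * empVar (fun i => haarLinear (π j) (a i)) :=
        mul_le_mul_of_nonneg_left (empVar_abs_le _) (sq_nonneg _)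
    _ = _ := by
        rw [empVar_comp_of_norm_eq (norm_haarLinear hd (π j)), empVar_smul,
          Real.sq_sqrt zero_le_two, ← mul_assoc, scale]
end

section
/- In a structured Haar scattering of depth j on d = 2^j_max vertices, the coefficient S_j x(n,q) has order m (i.e., is computed with exactly m absolute values) if and only if q = Σ_{k=1}^m 2^{j−j_k} for some 0 ≤ j_1 < … < j_m < j, with q = 0 corresponding to order 0. Consequently the number of order-m coefficients in S_j x equals C(j,m) · 2^{−j} d. -/
/-!
The recursion for `scatOrder j q` reads off the `j` low binary digits of `q` and adds one for
every digit equal to `1`, so the order of `q < 2 ^ j` is the number of ones in its binary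
expansion `q = ∑ i ∈ t, 2 ^ i`, `t ⊆ {0, …, j - 1}`. Writing the exponents of `t` as `j - j_k`
gives the characterisation, and since binary expansions are unique, the frequencies of order `m`
correspond to the `m`-element subsets of `{0, …, j - 1}`, of which there are `C(j, m)`.
-/

/-- The order (number of absolute values) of the structured Haar scattering
coefficient with frequency index `q` at depth `j`, defined by the recursion
`ord(0,·) = 0`, `ord(j+1, 2q) = ord(j, q)`, `ord(j+1, 2q+1) = ord(j, q) + 1`. -/
def scatOrder : ℕ → ℕ → ℕ
  | 0, _ => 0
  | (j + 1), q => if q % 2 = 0 then scatOrder j (q / 2) else scatOrder j (q / 2) + 1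

open Finset

theorem Finset.exists_strictMono_fin_iff_exists_mem_powersetCard {α β : Type*} [LinearOrder α]
    [AddCommMonoid β] (A : Finset α) (f : α → β) (m : ℕ) (b : β) :
    (∃ s : Fin m → α, StrictMono s ∧ (∀ k, s k ∈ A) ∧ ∑ k, f (s k) = b) ↔
      ∃ t ∈ A.powersetCard m, ∑ i ∈ t, f i = b := by
  constructor
  · rintro ⟨s, hs, hA, rfl⟩
    refine ⟨univ.image s, mem_powersetCard.2 ⟨?_, ?_⟩, ?_⟩
    · simpa [image_subset_iff] using hA
    · rw [card_image_of_injective _ hs.injective, card_fin]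
    · rw [sum_image fun k _ l _ hkl => hs.injective hkl]
  · rintro ⟨t, ht, rfl⟩
    obtain ⟨htA, htm⟩ := mem_powersetCard.1 ht
    refine ⟨t.orderEmbOfFin htm, (t.orderEmbOfFin htm).strictMono,
      fun k => htA (t.orderEmbOfFin_mem htm k), ?_⟩
    conv_rhs => rw [← t.image_orderEmbOfFin_univ htm]
    rw [sum_image fun k _ l _ hkl => (t.orderEmbOfFin htm).injective hkl]

theorem scatOrder_eq_length_bitIndices {j q : ℕ} (hq : q < 2 ^ j) :
    scatOrder j q = q.bitIndices.length := by
  induction j generalizing q with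
  | zero => simp_all [scatOrder]
  | succ j ih =>
    obtain ⟨r, rfl | rfl⟩ := Nat.even_or_odd' q
    · rw [scatOrder, if_pos (by omega), Nat.mul_div_cancel_left r two_pos, ih (by omega),
        Nat.bitIndices_two_mul, List.length_map]
    · rw [scatOrder, if_neg (by omega), show (2 * r + 1) / 2 = r by omega, ih (by omega),
        Nat.bitIndices_two_mul_add_one, List.length_cons, List.length_map]

theorem scatOrder_eq_card_bitIndices {j q : ℕ} (hq : q < 2 ^ j) :
    scatOrder j q = q.bitIndices.toFinset.card := by
  rw [scatOrder_eq_length_bitIndices hq, List.toFinset_card_of_nodup Nat.bitIndices_nodup]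

theorem toFinset_bitIndices_subset_range {j q : ℕ} (hq : q < 2 ^ j) :
    q.bitIndices.toFinset ⊆ range j := fun _ hi =>
  mem_range.2 <| (Nat.pow_lt_pow_iff_right one_lt_two).1 <|
    (Nat.two_pow_le_of_mem_bitIndices (List.mem_toFinset.1 hi)).trans_lt hq

theorem scatOrder_eq_iff_exists_mem_powersetCard {j q m : ℕ} (hq : q < 2 ^ j) :
    scatOrder j q = m ↔ ∃ t ∈ (range j).powersetCard m, ∑ i ∈ t, 2 ^ i = q := by
  rw [scatOrder_eq_card_bitIndices hq]
  constructor
  · rintro rfl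
    exact ⟨_, mem_powersetCard.2 ⟨toFinset_bitIndices_subset_range hq, rfl⟩,
      sum_toFinset_bitIndices_two_pow q⟩
  · rintro ⟨t, ht, rfl⟩
    rw [toFinset_bitIndices_sum_two_pow, (mem_powersetCard.1 ht).2]

theorem exists_strictMono_Icc_iff_exists_strictMono_range (j m q : ℕ) :
    (∃ s : Fin m → ℕ, StrictMono s ∧ (∀ k, 1 ≤ s k ∧ s k ≤ j) ∧ q = ∑ k, 2 ^ (j - s k)) ↔
      ∃ e : Fin m → ℕ, StrictMono e ∧ (∀ k, e k ∈ range j) ∧ ∑ k, 2 ^ e k = q := by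
  simp only [mem_range]
  constructor
  · rintro ⟨s, hs, hbound, rfl⟩
    refine ⟨fun k => j - s k.rev, fun k l hkl => ?_, fun k => ?_, ?_⟩ <;> dsimp only
    · have := hs (Fin.rev_lt_rev.2 hkl); have := hbound k.rev; have := hbound l.rev; omega
    · have := hbound k.rev; omega
    · exact Equiv.sum_comp Fin.revPerm (fun k => 2 ^ (j - s k))
  · rintro ⟨e, he, hbound, rfl⟩
    refine ⟨fun k => j - e k.rev, fun k l hkl => ?_, fun k => ?_, ?_⟩ <;> dsimp only
    · have := he (Fin.rev_lt_rev.2 hkl); have := hbound k.rev; omega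
    · have := hbound k.rev; omega
    · rw [← Equiv.sum_comp Fin.revPerm (fun k => 2 ^ e k)]
      refine sum_congr rfl fun k _ => ?_
      have := hbound k.rev
      simp only [Fin.revPerm_apply]
      congr 1
      omega

theorem filter_scatOrder_eq_eq_image_powersetCard (j m : ℕ) :
    (range (2 ^ j)).filter (fun q => scatOrder j q = m) =
      ((range j).powersetCard m).image (fun t => ∑ i ∈ t, 2 ^ i) := by
  ext q
  rw [mem_filter, mem_range, mem_image]
  constructor
  · rintro ⟨hq, hm⟩
    exact (scatOrder_eq_iff_exists_mem_powersetCard hq).1 hm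
  · rintro ⟨t, ht, rfl⟩
    have hq : ∑ i ∈ t, 2 ^ i < 2 ^ j :=
      Nat.geomSum_lt le_rfl fun i hi => mem_range.1 ((mem_powersetCard.1 ht).1 hi)
    exact ⟨hq, (scatOrder_eq_iff_exists_mem_powersetCard hq).2 ⟨t, ht, rfl⟩⟩

theorem card_filter_scatOrder_eq (j m : ℕ) :
    ((range (2 ^ j)).filter (fun q => scatOrder j q = m)).card = j.choose m := by
  rw [filter_scatOrder_eq_eq_image_powersetCard,
    card_image_of_injective _ (geomSum_injective le_rfl), card_powersetCard, card_range]

theorem scatOrder_iff_card_general (jmax j m : ℕ) :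
    (∀ q < 2 ^ j, (scatOrder j q = m ↔
        ∃ s : Fin m → ℕ, StrictMono s ∧ (∀ k, 1 ≤ s k ∧ s k ≤ j) ∧
          q = ∑ k, 2 ^ (j - s k))) ∧
    ((Finset.range (2 ^ j)).filter (fun q => scatOrder j q = m)).card * 2 ^ (jmax - j) =
      Nat.choose j m * 2 ^ (jmax - j) := by
  refine ⟨fun q hq => ?_, by rw [card_filter_scatOrder_eq]⟩
  rw [scatOrder_eq_iff_exists_mem_powersetCard hq,
    exists_strictMono_Icc_iff_exists_strictMono_range,
    exists_strictMono_fin_iff_exists_mem_powersetCard]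

/-- In a structured Haar scattering of depth `j` on `d = 2^jmax` vertices, the
coefficient `S_j x(n,q)` has order `m` iff `q = Σ_{k=1}^m 2^{j−j_k}` for some
strictly increasing exponents `1 ≤ j_1 < … < j_m ≤ j` (with `q = 0` of order 0);
consequently the number of order-`m` coefficients in `S_j x` is
`C(j,m) · 2^{−j} d = C(j,m) · 2^{jmax−j}`. -/
theorem scatOrder_iff_card (jmax j m : ℕ) (hj : j ≤ jmax) :
    (∀ q < 2 ^ j, (scatOrder j q = m ↔
        ∃ s : Fin m → ℕ, StrictMono s ∧ (∀ k, 1 ≤ s k ∧ s k ≤ j) ∧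
          q = ∑ k, 2 ^ (j - s k))) ∧
    ((Finset.range (2 ^ j)).filter (fun q => scatOrder j q = m)).card * 2 ^ (jmax - j) =
      Nat.choose j m * 2 ^ (jmax - j) :=
  scatOrder_iff_card_general jmax j m
end
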